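/- Suppose two abelian types T = (g, h, ρ) and T′ = (g, h, ρ′) are given, with respect to fixed bases z of g and x_1, …, x_n of h, by the triples (λ, R, M) and (λ, R, M′) respectively. Then T is isomorphic to T′ if and only if there exist an invertible n×n matrix G and a nonzero scalar γ such that ĜR = RG, γ^pλ = γλ, and M′ = γ·G^{−1}MG, where Ĝ is obtained from G by taking the p-th power of every entry. -/

import Mathlib

set_option linter.unusedSectionVars false

open scoped TensorProduct

attribute [local instance 100] LieRing.ofAssociativeRing

namespace PD

/-- An abelian restricted Lie algebra over `k` (of characteristic `p`): an abelian Lie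
algebra (trivial bracket) together with its restricted `p`-th power map, which for an
abelian Lie algebra is additive and Frobenius-semilinear. -/
class AbRes (p : ℕ) (k : Type) (V : Type) [Field k] [AddCommGroup V] [Module k V] :
    Type where
  pMap : V → V
  pMap_add : ∀ x y : V, pMap (x + y) = pMap x + pMap y
  pMap_smul : ∀ (a : k) (x : V), pMap (a • x) = a ^ p • pMap x

/-- Type synonym equipping a module with its trivial (abelian) Lie algebra structure. -/
def Ab (V : Type) : Type := V

instance (V : Type) [AddCommGroup V] : AddCommGroup (Ab V) := inferInstanceAs (AddCommGroup V)

instance (k V : Type) [Field k] [AddCommGroup V] [Module k V] : Module k (Ab V) :=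
  inferInstanceAs (Module k V)

instance (V : Type) [AddCommGroup V] : LieRing (Ab V) :=
  { (inferInstance : AddCommGroup (Ab V)) with
    bracket := fun _ _ => 0
    add_lie := by intros; simp
    lie_add := by intros; simp
    lie_self := by intros; rfl
    leibniz_lie := by intros; simp }

instance (k V : Type) [Field k] [AddCommGroup V] [Module k V] : LieAlgebra k (Ab V) :=
  { (inferInstance : Module k (Ab V)) with
    lie_smul := by intros; show (0 : Ab V) = _ • (0 : Ab V); simp }

/-- The identity of `V`, viewed as a linear equivalence `V ≃ Ab V`. -/
def toAb (k V : Type) [Field k] [AddCommGroup V] [Module k V] : V ≃ₗ[k] Ab V :=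
  LinearEquiv.refl k V

section Core

variable (p : ℕ) [Fact (Nat.Prime p)] (k : Type) [Field k] [CharP k p]
variable (V : Type) [AddCommGroup V] [Module k V]
variable [AbRes p k V]

/-- The relation defining `u(h) = U(h)/(x^p - x^{[p]})`. -/
def uRel : UniversalEnvelopingAlgebra k (Ab V) → UniversalEnvelopingAlgebra k (Ab V) → Prop :=
  fun a b => ∃ x : V,
    a = (UniversalEnvelopingAlgebra.ι k (toAb k V x) : UniversalEnvelopingAlgebra k (Ab V)) ^ p ∧
    b = UniversalEnvelopingAlgebra.ι k (toAb k V (AbRes.pMap (p := p) (k := k) x))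

/-- The restricted universal enveloping algebra `u(h) := U(h)/(x^p − x^{[p]}, x ∈ h)`. -/
abbrev uRes : Type := RingQuot (uRel p k V)

/-- The canonical linear map `h → u(h)`. -/
noncomputable def mkι : V →ₗ[k] uRes p k V :=
  (RingQuot.mkAlgHom k (uRel p k V)).toLinearMap.comp
    ((UniversalEnvelopingAlgebra.ι k).toLinearMap.comp (toAb k V).toLinearMap)

lemma uea_comm (a b : Ab V) :
    (UniversalEnvelopingAlgebra.ι k a : UniversalEnvelopingAlgebra k (Ab V)) *
      UniversalEnvelopingAlgebra.ι k b =
    UniversalEnvelopingAlgebra.ι k b * UniversalEnvelopingAlgebra.ι k a := by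
  have h := (UniversalEnvelopingAlgebra.ι (R := k) (L := Ab V)).map_lie a b
  rw [show ⁅a, b⁆ = (0 : Ab V) from rfl, map_zero,
    LieRing.of_associative_ring_bracket] at h
  exact sub_eq_zero.1 h.symm

lemma mkι_comm (x y : V) : mkι p k V x * mkι p k V y = mkι p k V y * mkι p k V x := by
  show (RingQuot.mkAlgHom k (uRel p k V)) (UniversalEnvelopingAlgebra.ι k (toAb k V x)) *
      (RingQuot.mkAlgHom k (uRel p k V)) (UniversalEnvelopingAlgebra.ι k (toAb k V y)) = _
  rw [← map_mul (RingQuot.mkAlgHom k (uRel p k V)), uea_comm, map_mul]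
  rfl

lemma mkι_pow (x : V) :
    mkι p k V x ^ p = mkι p k V (AbRes.pMap (p := p) (k := k) x) := by
  show (RingQuot.mkAlgHom k (uRel p k V)) (UniversalEnvelopingAlgebra.ι k (toAb k V x)) ^ p = _
  rw [← map_pow]
  exact RingQuot.mkAlgHom_rel k ⟨x, rfl, rfl⟩

/-- Freshman's dream in any `k`-algebra (`k` of characteristic `p`), for commuting
elements. -/
lemma add_pow_charP {A : Type} [Ring A] [Algebra k A] {x y : A} (h : Commute x y) :
    (x + y) ^ p = x ^ p + y ^ p := by
  obtain ⟨r, hr⟩ := h.exists_add_pow_prime_eq (Fact.out : Nat.Prime p)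
  have hp0 : ((p : ℕ) : A) = 0 := by
    rw [← map_natCast (algebraMap k A) p, CharP.cast_eq_zero k p, map_zero]
  rw [hr, hp0]
  simp

/-- Build a Lie algebra morphism (for the trivial bracket on `V`) from a linear map with
pairwise commuting images. -/
noncomputable def lieHomOfLinear {A : Type} [Ring A] [Algebra k A] (f : V →ₗ[k] A)
    (hf : ∀ x y : V, f x * f y = f y * f x) : Ab V →ₗ⁅k⁆ A :=
  { toLinearMap := f.comp (toAb k V).symm.toLinearMap
    map_lie' := by
      intro x y
      show f.comp (toAb k V).symm.toLinearMap ((0 : Ab V)) = ⁅_, _⁆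
      rw [LieRing.of_associative_ring_bracket]
      simp only [map_zero]
      exact (sub_eq_zero.2 (hf _ _)).symm }

/-- The universal property of `u(h)`: a linear map `f : h → A` with commuting images
satisfying `f(x)^p = f(x^{[p]})` extends to an algebra map `u(h) → A`. -/
noncomputable def extendAlg {A : Type} [Ring A] [Algebra k A] (f : V →ₗ[k] A)
    (hf : ∀ x y : V, f x * f y = f y * f x)
    (hp : ∀ x : V, f x ^ p = f (AbRes.pMap (p := p) (k := k) x)) :
    uRes p k V →ₐ[k] A :=
  RingQuot.liftAlgHom k
    ⟨UniversalEnvelopingAlgebra.lift k (lieHomOfLinear (k := k) (V := V) f hf), by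
      rintro a b ⟨x, rfl, rfl⟩
      simp only [map_pow, UniversalEnvelopingAlgebra.lift_ι_apply]
      exact hp x⟩

@[simp] lemma extendAlg_mkι {A : Type} [Ring A] [Algebra k A] (f : V →ₗ[k] A)
    (hf : ∀ x y : V, f x * f y = f y * f x)
    (hp : ∀ x : V, f x ^ p = f (AbRes.pMap (p := p) (k := k) x)) (x : V) :
    extendAlg p k V f hf hp (mkι p k V x) = f x := by
  show RingQuot.liftAlgHom k _
    ((RingQuot.mkAlgHom k (uRel p k V)) (UniversalEnvelopingAlgebra.ι k (toAb k V x))) = f x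
  rw [RingQuot.liftAlgHom_mkAlgHom_apply, UniversalEnvelopingAlgebra.lift_ι_apply]
  rfl

/-- The counit `ε : u(h) → k`. -/
noncomputable def counit : uRes p k V →ₐ[k] k :=
  extendAlg p k V (0 : V →ₗ[k] k) (by intros; simp) (by
    intro x
    simp [zero_pow (Nat.Prime.ne_zero (Fact.out : Nat.Prime p))])

/-- The augmentation ideal `u(h)⁺`, as a submodule. -/
noncomputable def Aplus : Submodule k (uRes p k V) :=
  LinearMap.ker (counit p k V).toLinearMap

/-- `(u(h)⁺)^{⊗2}` viewed inside `u(h) ⊗ u(h)`. -/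
noncomputable def AplusSq : Submodule k (uRes p k V ⊗[k] uRes p k V) :=
  Submodule.map₂ (TensorProduct.mk k (uRes p k V) (uRes p k V)) (Aplus p k V) (Aplus p k V)

/-- The comultiplication `Δ : u(h) → u(h) ⊗ u(h)`, the algebra map making every element
of `h` primitive. -/
noncomputable def comul : uRes p k V →ₐ[k] uRes p k V ⊗[k] uRes p k V :=
  extendAlg p k V
    (((TensorProduct.mk k (uRes p k V) (uRes p k V)).flip 1).comp (mkι p k V)
      + (TensorProduct.mk k (uRes p k V) (uRes p k V) 1).comp (mkι p k V))
    (by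
      intro x y
      simp only [LinearMap.add_apply, LinearMap.coe_comp, Function.comp_apply,
        TensorProduct.mk_apply, LinearMap.flip_apply]
      simp only [add_mul, mul_add, Algebra.TensorProduct.tmul_mul_tmul, one_mul, mul_one,
        mkι_comm p k V x y]
      abel)
    (by
      intro x
      simp only [LinearMap.add_apply, LinearMap.coe_comp, Function.comp_apply,
        TensorProduct.mk_apply, LinearMap.flip_apply]
      have hc : Commute ((mkι p k V x) ⊗ₜ[k] (1 : uRes p k V))
          ((1 : uRes p k V) ⊗ₜ[k] (mkι p k V x)) := by
        unfold Commute SemiconjBy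
        simp [Algebra.TensorProduct.tmul_mul_tmul]
      rw [add_pow_charP p k hc, Algebra.TensorProduct.tmul_pow, Algebra.TensorProduct.tmul_pow,
        one_pow, mkι_pow])

/-- The first cobar differential `∂¹(r) = 1 ⊗ r − Δ(r) + r ⊗ 1`. -/
noncomputable def d1 : uRes p k V →ₗ[k] uRes p k V ⊗[k] uRes p k V :=
  TensorProduct.mk k (uRes p k V) (uRes p k V) 1 - (comul p k V).toLinearMap
    + (TensorProduct.mk k (uRes p k V) (uRes p k V)).flip 1

/-- The second cobar differential `∂²(r ⊗ s) = 1 ⊗ r ⊗ s − Δ(r) ⊗ s + r ⊗ Δ(s) − r ⊗ s ⊗ 1`. -/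
noncomputable def d2 : uRes p k V ⊗[k] uRes p k V →ₗ[k]
    uRes p k V ⊗[k] (uRes p k V ⊗[k] uRes p k V) :=
  TensorProduct.mk k (uRes p k V) (uRes p k V ⊗[k] uRes p k V) 1
    - (TensorProduct.assoc k (uRes p k V) (uRes p k V) (uRes p k V)).toLinearMap.comp
        (LinearMap.rTensor (uRes p k V) (comul p k V).toLinearMap)
    + LinearMap.lTensor (uRes p k V) (comul p k V).toLinearMap
    - (TensorProduct.assoc k (uRes p k V) (uRes p k V) (uRes p k V)).toLinearMap.comp
        ((TensorProduct.mk k (uRes p k V ⊗[k] uRes p k V) (uRes p k V)).flip 1)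

/-- The element `ω(r) = ∑_{i=1}^{p−1} ((p−1)!/(i!(p−i)!)) rⁱ ⊗ r^{p−i}`. -/
noncomputable def omega (r : uRes p k V) : uRes p k V ⊗[k] uRes p k V :=
  ∑ i ∈ Finset.Ico 1 p,
    ((Nat.factorial (p-1) / (Nat.factorial i * Nat.factorial (p - i)) : ℕ) : k) •
      ((r ^ i) ⊗ₜ[k] (r ^ (p - i)))

/-- The extension of `ρ_z : h → h` (with `ρ_z ∘ [p] = 0`) to a derivation of `u(h)`,
constructed through the trivial square-zero extension. -/
noncomputable def Dres (f : V →ₗ[k] V)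
    (hf : ∀ x : V, f (AbRes.pMap (p := p) (k := k) x) = 0) :
    uRes p k V →ₗ[k] uRes p k V :=
  ((TrivSqZeroExt.sndHom (uRes p k V) (uRes p k V)).restrictScalars k).comp
    (extendAlg p k V
      ({ toFun := fun x => TrivSqZeroExt.inl (mkι p k V x)
              + TrivSqZeroExt.inr (mkι p k V (f x))
         map_add' := by
          intro x y
          simp only [map_add, TrivSqZeroExt.inl_add, TrivSqZeroExt.inr_add]
          abel
         map_smul' := by
          intro c x
          simp only [map_smul, TrivSqZeroExt.inl_smul, TrivSqZeroExt.inr_smul, smul_add,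
            RingHom.id_apply] } : V →ₗ[k] TrivSqZeroExt (uRes p k V) (uRes p k V))
      (by
        intro x y
        simp only [LinearMap.coe_mk, AddHom.coe_mk]
        simp only [add_mul, mul_add, TrivSqZeroExt.inl_mul_inl, TrivSqZeroExt.inl_mul_inr,
          TrivSqZeroExt.inr_mul_inl, TrivSqZeroExt.inr_mul_inr, smul_eq_mul,
          MulOpposite.smul_eq_mul_unop, MulOpposite.unop_op]
        rw [mkι_comm p k V x y, mkι_comm p k V x (f y), mkι_comm p k V (f x) y]
        abel
      )
      (by
        intro x
        simp only [LinearMap.coe_mk, AddHom.coe_mk]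
        have hc : Commute
            (TrivSqZeroExt.inl (mkι p k V x) : TrivSqZeroExt (uRes p k V) (uRes p k V))
            (TrivSqZeroExt.inr (mkι p k V (f x))) := by
          unfold Commute SemiconjBy
          rw [TrivSqZeroExt.inl_mul_inr, TrivSqZeroExt.inr_mul_inl, smul_eq_mul,
            MulOpposite.smul_eq_mul_unop, MulOpposite.unop_op, mkι_comm]
        rw [add_pow_charP p k hc]
        have h2 : (TrivSqZeroExt.inr (mkι p k V (f x)) :
            TrivSqZeroExt (uRes p k V) (uRes p k V)) ^ p = 0 := by
          have h2' : (TrivSqZeroExt.inr (mkι p k V (f x)) :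
              TrivSqZeroExt (uRes p k V) (uRes p k V)) ^ 2 = 0 := by
            rw [sq, TrivSqZeroExt.inr_mul_inr]
          have hle : 2 + (p - 2) = p := by
            have := (Fact.out : Nat.Prime p).two_le
            omega
          have hv : (TrivSqZeroExt.inr (mkι p k V (f x)) :
              TrivSqZeroExt (uRes p k V) (uRes p k V)) ^ p
              = (TrivSqZeroExt.inr (mkι p k V (f x)) :
              TrivSqZeroExt (uRes p k V) (uRes p k V)) ^ (2 + (p - 2)) := by rw [hle]
          rw [hv, pow_add, h2', zero_mul]
        have h3 : (TrivSqZeroExt.inl (mkι p k V x) :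
            TrivSqZeroExt (uRes p k V) (uRes p k V)) ^ p
            = TrivSqZeroExt.inl ((mkι p k V x) ^ p) :=
          (map_pow (TrivSqZeroExt.inlHom (uRes p k V) (uRes p k V)) (mkι p k V x) p).symm
        rw [h2, add_zero, h3, mkι_pow, hf x, map_zero, TrivSqZeroExt.inr_zero, add_zero]
      )).toLinearMap

/-- The action of `ρ_z` on `u(h) ⊗ u(h)`, i.e. `ρ ⊗ 1 + 1 ⊗ ρ`. -/
noncomputable def Dtens (f : V →ₗ[k] V)
    (hf : ∀ x : V, f (AbRes.pMap (p := p) (k := k) x) = 0) :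
    uRes p k V ⊗[k] uRes p k V →ₗ[k] uRes p k V ⊗[k] uRes p k V :=
  LinearMap.rTensor (uRes p k V) (Dres p k V f hf)
    + LinearMap.lTensor (uRes p k V) (Dres p k V f hf)

/-- `Φ_z` in (cobar) degree 1: `Φ_z(r) = r^p − λ r + ρ_z^{p−1}(r)`. -/
noncomputable def Phi1 (lam : k) (f : V →ₗ[k] V)
    (hf : ∀ x : V, f (AbRes.pMap (p := p) (k := k) x) = 0) (r : uRes p k V) : uRes p k V :=
  r ^ p - lam • r + ((Dres p k V f hf) ^ (p - 1) : uRes p k V →ₗ[k] uRes p k V) r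

/-- `Φ_z` in (cobar) degree 2: `Φ_z(χ) = χ^p − λ χ + (ρ_z ⊗ 1 + 1 ⊗ ρ_z)^{p−1}(χ)`,
the `p`-th power being the one of the ring `u(h) ⊗ u(h)`. -/
noncomputable def Phi2 (lam : k) (f : V →ₗ[k] V)
    (hf : ∀ x : V, f (AbRes.pMap (p := p) (k := k) x) = 0)
    (χ : uRes p k V ⊗[k] uRes p k V) : uRes p k V ⊗[k] uRes p k V :=
  χ ^ p - lam • χ
    + ((Dtens p k V f hf) ^ (p - 1) :
        uRes p k V ⊗[k] uRes p k V →ₗ[k] uRes p k V ⊗[k] uRes p k V) χ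

end Core

section Rep

variable (p : ℕ) [Fact (Nat.Prime p)] (k : Type) [Field k] [CharP k p]
variable {G V : Type} [AddCommGroup G] [Module k G] [AddCommGroup V] [Module k V]
variable [AbRes p k G] [AbRes p k V]

/-- An algebraic representation of the abelian restricted Lie algebra `g` on the abelian
restricted Lie algebra `h` (conditions (i)–(iv) of the definition of an algebraic
representation, specialized to abelian restricted Lie algebras: condition (iii) is then
vacuous, and in condition (iv) the right-hand side vanishes). -/
structure IsAlgebraicRep (ρ : G →ₗ[k] Module.End k V) : Prop where
  comm : ∀ x y : G, ρ x * ρ y = ρ y * ρ x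
  map_pMap : ∀ x : G, ρ (AbRes.pMap (p := p) (k := k) x) = ρ x ^ p
  annih : ∀ (x : G) (a : V), ρ x (AbRes.pMap (p := p) (k := k) a) = 0

end Rep


section More

variable (p : ℕ) [Fact (Nat.Prime p)] (k : Type) [Field k] [CharP k p]
variable (V : Type) [AddCommGroup V] [Module k V] [AbRes p k V]

/-- The functorial extension of a linear map of abelian restricted Lie algebras commuting
with the restricted maps, to an algebra map `u(h) → u(h')` (a morphism of Hopf algebras). -/
noncomputable def uResMap (W : Type) [AddCommGroup W] [Module k W] [AbRes p k W]
    (f : V →ₗ[k] W)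
    (hcompat : ∀ x : V, f (AbRes.pMap (p := p) (k := k) x)
      = AbRes.pMap (p := p) (k := k) (f x)) : uRes p k V →ₐ[k] uRes p k W :=
  extendAlg p k V ((mkι p k W).comp f) (fun x y => mkι_comm p k W (f x) (f y))
    (fun x => by
      simp only [LinearMap.coe_comp, Function.comp_apply]
      rw [mkι_pow, hcompat])

/-- `Φ_z` restricted to `h ⊆ u(h)`: `Φ_z(r) = r^{[p]} − λ r + ρ_z^{p−1}(r)`
(for `r ∈ h` one has `r^p = r^{[p]}` in `u(h)`). -/
noncomputable def PhiV (lam : k) (f : Module.End k V) : V → V :=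
  fun r => AbRes.pMap (p := p) (k := k) r - lam • r + (f ^ (p - 1)) r

/-- The abelian type determined by `ρ_z = f` and `z^{[p]} = λ z` is *permissible* if
`Ker ρ_z = Im Φ_z` on `h`. -/
noncomputable def Permissible (lam : k) (f : Module.End k V) : Prop :=
  {r : V | f r = 0} = Set.range (PhiV p k V lam f)

end More

section Iso

variable (p : ℕ) (k : Type) [Field k]

/-- An isomorphism of (abelian) restricted Lie algebras: a linear equivalence commuting
with the restricted maps. -/
structure RestrictedLieIso (V W : Type) [AddCommGroup V] [Module k V] [AddCommGroup W]
    [Module k W] [AbRes p k V] [AbRes p k W] extends V ≃ₗ[k] W where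
  map_pMap : ∀ x : V, toLinearEquiv (AbRes.pMap (p := p) (k := k) x)
    = AbRes.pMap (p := p) (k := k) (toLinearEquiv x)

/-- An isomorphism of abelian types `T = (g, h, ρ) → T' = (g', h', ρ')` : a pair
`(φ₁ : g' → g, φ₂ : h → h')` of restricted Lie algebra isomorphisms intertwining `ρ`
and `ρ'`. -/
structure AbTypeIso {G V G' V' : Type}
    [AddCommGroup G] [Module k G] [AddCommGroup V] [Module k V]
    [AddCommGroup G'] [Module k G'] [AddCommGroup V'] [Module k V']
    [AbRes p k G] [AbRes p k V] [AbRes p k G'] [AbRes p k V']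
    (ρ : G →ₗ[k] Module.End k V) (ρ' : G' →ₗ[k] Module.End k V') where
  e1 : RestrictedLieIso p k G' G
  e2 : RestrictedLieIso p k V V'
  compat : ∀ (x' : G') (a : V),
    e2.toLinearEquiv (ρ (e1.toLinearEquiv x') a) = ρ' x' (e2.toLinearEquiv a)

end Iso

section Hopf

variable (k : Type) [Field k]

/-- The primitive space `P(H)` of a bialgebra `H`. -/
noncomputable def primSpace (H : Type) [Ring H] [Bialgebra k H] : Submodule k H where
  carrier := {x : H | Coalgebra.comul (R := k) x = x ⊗ₜ[k] (1 : H) + (1 : H) ⊗ₜ[k] x}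
  add_mem' := by
    intro a b ha hb
    simp only [Set.mem_setOf_eq] at *
    rw [map_add, ha, hb, TensorProduct.add_tmul, TensorProduct.tmul_add]
    abel
  zero_mem' := by simp
  smul_mem' := by
    intro c x hx
    simp only [Set.mem_setOf_eq] at *
    rw [map_smul, hx, smul_add, TensorProduct.smul_tmul', ← TensorProduct.tmul_smul]

/-- A subcoalgebra of a bialgebra, as a submodule `C` with `Δ(C) ⊆ C ⊗ C`. -/
def IsSubcoalgebra (H : Type) [Ring H] [Bialgebra k H] (C : Submodule k H) : Prop :=
  ∀ x ∈ C, Coalgebra.comul (R := k) x ∈ Submodule.map₂ (TensorProduct.mk k H H) C C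

/-- A simple subcoalgebra: a nonzero subcoalgebra with no nonzero proper subcoalgebras. -/
def IsSimpleSubcoalgebra (H : Type) [Ring H] [Bialgebra k H] (C : Submodule k H) : Prop :=
  C ≠ ⊥ ∧ IsSubcoalgebra k H C ∧
    ∀ D ≤ C, IsSubcoalgebra k H D → D = ⊥ ∨ D = C

/-- The coradical of a bialgebra: the sum of all its simple subcoalgebras. -/
noncomputable def coradical (H : Type) [Ring H] [Bialgebra k H] : Submodule k H :=
  sSup {C | IsSimpleSubcoalgebra k H C}

/-- A (finite-dimensional) bialgebra is connected if its coradical is one-dimensional. -/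
def IsConnectedCoalg (H : Type) [Ring H] [Bialgebra k H] : Prop :=
  Module.finrank k ↥(coradical k H) = 1

/-- An isomorphism of Hopf algebras: an algebra isomorphism compatible with the
comultiplications and the counits. -/
structure HopfAlgIso (H1 H2 : Type) [Ring H1] [Ring H2] [HopfAlgebra k H1]
    [HopfAlgebra k H2] extends H1 ≃ₐ[k] H2 where
  map_comul : ∀ a : H1, Coalgebra.comul (R := k) (toAlgEquiv a)
      = TensorProduct.map toAlgEquiv.toLinearMap toAlgEquiv.toLinearMap
          (Coalgebra.comul (R := k) a)
  map_counit : ∀ a : H1, Coalgebra.counit (R := k) (toAlgEquiv a) = Coalgebra.counit (R := k) a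

end Hopf

section Realization

variable (p : ℕ) [Fact (Nat.Prime p)] (k : Type) [Field k] [CharP k p]
variable (n : ℕ) (V : Type) [AddCommGroup V] [Module k V] [AbRes p k V]

/-- A realization of the primitive deformation `u_z(D)` of `u(T)` associated to a datum
`D = (T, Θ, χ)` and `0 ≠ z ∈ g` with `z^{[p]} = λ z`: a connected Hopf algebra `H` of
dimension `p^{n+1}` containing `u(h)` as a Hopf subalgebra and an element `Z` satisfying
the deformed relations `[Z, r] = ρ_z(r)`, `Z^p − λZ + Θ = 0`,
`Δ(Z) = Z ⊗ 1 + 1 ⊗ Z + χ`, generating `H` over `u(h)`, and whose primitive space is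
exactly (the image of) `h`.  Here `D : u(h) → u(h)` is the derivation extending `ρ_z`. -/
structure PDRealization (D : uRes p k V →ₗ[k] uRes p k V) (lam : k) (Θ : uRes p k V)
    (χ : uRes p k V ⊗[k] uRes p k V) : Type 1 where
  H : Type
  [ringH : Ring H]
  [hopfH : HopfAlgebra k H]
  findim : Module.finrank k H = p ^ (n + 1)
  connected : IsConnectedCoalg k H
  j : uRes p k V →ₐ[k] H
  j_inj : Function.Injective j
  j_comul : ∀ a : uRes p k V, Coalgebra.comul (R := k) (j a)
      = TensorProduct.map j.toLinearMap j.toLinearMap (comul p k V a)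
  j_counit : ∀ a : uRes p k V, Coalgebra.counit (R := k) (j a) = counit p k V a
  Z : H
  gen : Algebra.adjoin k (Set.range j ∪ {Z}) = ⊤
  commZ : ∀ a : uRes p k V, Z * j a - j a * Z = j (D a)
  powZ : Z ^ p - lam • Z + j Θ = 0
  comulZ : Coalgebra.comul (R := k) Z
      = Z ⊗ₜ[k] (1 : H) + (1 : H) ⊗ₜ[k] Z
        + TensorProduct.map j.toLinearMap j.toLinearMap χ
  prim : primSpace k H = Submodule.map (j.toLinearMap ∘ₗ mkι p k V) ⊤

/-- `D = (T, Θ, χ)` is a PD datum with respect to `z` (with `z^{[p]} = λz` and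
`D` the derivation of `u(h)` extending `ρ_z`) iff the corresponding primitive
deformation `u_z(D)` exists, i.e. is a `p^{n+1}`-dimensional connected Hopf algebra whose
primitive space is (isomorphic to) `h`. -/
def IsPDDatum (D : uRes p k V →ₗ[k] uRes p k V) (lam : k) (Θ : uRes p k V)
    (χ : uRes p k V ⊗[k] uRes p k V) : Prop :=
  Nonempty (PDRealization p k n V D lam Θ χ)

/-- Hopf algebra isomorphisms between (the underlying Hopf algebras of) two primitive
deformation realizations. -/
def RealIso {n' : ℕ} {V' : Type} [AddCommGroup V'] [Module k V'] [AbRes p k V']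
    {D : uRes p k V →ₗ[k] uRes p k V} {lam : k} {Θ : uRes p k V}
    {χ : uRes p k V ⊗[k] uRes p k V}
    {D' : uRes p k V' →ₗ[k] uRes p k V'} {lam' : k} {Θ' : uRes p k V'}
    {χ' : uRes p k V' ⊗[k] uRes p k V'}
    (R : PDRealization p k n V D lam Θ χ)
    (R' : PDRealization p k n' V' D' lam' Θ' χ') : Type :=
  letI := R.ringH; letI := R.hopfH; letI := R'.ringH; letI := R'.hopfH
  HopfAlgIso k R.H R'.H

end Realization

section Points

variable (p n : ℕ) [Fact (Nat.Prime p)] (k : Type) [Field k] [CharP k p]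
variable (V : Type) [AddCommGroup V] [Module k V] [AbRes p k V]

/-- Index set for the coordinates `a_{ij}`, `1 ≤ i < j ≤ n`. -/
abbrev UpperIdx (n : ℕ) : Type := {ij : Fin n × Fin n // ij.1 < ij.2}

/-- A point of the affine space `𝔸^{n(n+1)/2}`, with coordinates `(a_{ij}, b_k)`. -/
abbrev Pt (n : ℕ) (k : Type) : Type := (UpperIdx n → k) × (Fin n → k)

/-- The 2-cocycle `χ_P = ∑_{i<j} a_{ij} x_i ⊗ x_j + ω(∑_k b_k x_k)` associated to a point
`P ∈ 𝔸^{n(n+1)/2}` and a basis `x` of `h`. -/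
noncomputable def chiP (x : Module.Basis (Fin n) k V) (P : Pt n k) :
    uRes p k V ⊗[k] uRes p k V :=
  (∑ q : UpperIdx n,
      P.1 q • ((mkι p k V (x q.1.1)) ⊗ₜ[k] (mkι p k V (x q.1.2))))
    + omega p k V (mkι p k V (∑ j, P.2 j • x j))

/-- A point `P` is admissible w.r.t. the type `T` if there is `s ∈ u(h)⁺` with
`Φ_z(χ_P) = ∂¹(s)` and `ρ_z(s) = 0`. -/
noncomputable def IsAdmissible (lam : k) (f : V →ₗ[k] V)
    (hf : ∀ a : V, f (AbRes.pMap (p := p) (k := k) a) = 0)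
    (x : Module.Basis (Fin n) k V) (P : Pt n k) : Prop :=
  ∃ s ∈ Aplus p k V, Phi2 p k V lam f hf (chiP p n k V x P) = d1 p k V s
    ∧ Dres p k V f hf s = 0

/-- The characterization of PD data: `(T, Θ, χ)` is a PD datum w.r.t. `z` iff `χ` is a
2-cocycle which is not a 2-coboundary, `ρ_z(Θ) = 0` and `Φ_z(χ) = ∂¹(Θ)`. -/
noncomputable def IsPDDatumC (lam : k) (f : V →ₗ[k] V)
    (hf : ∀ a : V, f (AbRes.pMap (p := p) (k := k) a) = 0)
    (Θ : uRes p k V) (χ : uRes p k V ⊗[k] uRes p k V) : Prop :=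
  Θ ∈ Aplus p k V ∧ χ ∈ AplusSq p k V ∧ d2 p k V χ = 0 ∧
    (¬ ∃ s ∈ Aplus p k V, χ = d1 p k V s) ∧
    Dres p k V f hf Θ = 0 ∧ Phi2 p k V lam f hf χ = d1 p k V Θ

/-- The equivalence relation on PD data defining `ℋ²(T)`:
`(Θ, χ) ∼ (Θ', χ')` iff `Θ' − Θ = Φ_z(s)` and `χ' − χ = ∂¹(s)` for some `s ∈ u(h)⁺`. -/
noncomputable def PDEquiv (lam : k) (f : V →ₗ[k] V)
    (hf : ∀ a : V, f (AbRes.pMap (p := p) (k := k) a) = 0)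
    (d d' : uRes p k V × (uRes p k V ⊗[k] uRes p k V)) : Prop :=
  ∃ s ∈ Aplus p k V, d'.1 - d.1 = Phi1 p k V lam f hf s ∧ d'.2 - d.2 = d1 p k V s

/-- The action of an automorphism `φ = (γ, G) ∈ Aut(T)` on points of `𝔸^{n(n+1)/2}`:
`ã_{ij} = ∑_{r<s} γ(G_{ri}G_{sj} − G_{rj}G_{si}) a_{rs}`,
`b̃_k = ∑_s γ^{1/p} G_{sk} b_s`. -/
noncomputable def actPt [PerfectRing k p] (γ : k) (Gm : Matrix (Fin n) (Fin n) k)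
    (P : Pt n k) : Pt n k :=
  (fun q' => ∑ q : UpperIdx n,
      γ * (Gm q.1.1 q'.1.1 * Gm q.1.2 q'.1.2 - Gm q.1.1 q'.1.2 * Gm q.1.2 q'.1.1) * P.1 q,
   fun j => ∑ s : Fin n, (frobeniusEquiv k p).symm γ * Gm s j * P.2 s)

end Points

end PD

/-!
Since `g = k z`, the first component of an isomorphism is multiplication by a scalar `γ ≠ 0`,
and it commutes with the `p`-map iff `γ^p λ = γ λ`. Record the second component `φ₂` by the
matrix `G` whose `i`-th row holds the coordinates of `φ₂ (x i)` (so its `LinearMap.toMatrix` is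
`Gᵀ`). The maps `v ↦ φ₂ (v^[p])` and `v ↦ (φ₂ v)^[p]` are additive and `p`-semilinear, so they
agree as soon as they agree on the basis, which in coordinates reads `ĜR = RG`. Finally, the
intertwining relation is linear in the element of `g`, so it only has to be checked at `z`,
where it reads `γ M G = G M'`.
-/

open scoped Matrix

section ToMatrix

variable {R : Type*} [CommSemiring R] {M N : Type*} [AddCommMonoid M] [Module R M]
  [AddCommMonoid N] [Module R N] {ι κ : Type*} [Fintype ι] [DecidableEq ι] [Fintype κ]

lemma LinearMap.toMatrix_eq_transpose_iff (b : Module.Basis ι R M) (c : Module.Basis κ R N)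
    (f : M →ₗ[R] N) (A : Matrix ι κ R) :
    LinearMap.toMatrix b c f = Aᵀ ↔ ∀ i, f (b i) = ∑ j, A i j • c j := by
  rw [← LinearEquiv.eq_symm_apply, ← Matrix.toLin]
  refine ⟨fun h i => ?_, fun h => b.ext fun i => ?_⟩ <;>
    simp only [h, Matrix.toLin_self, Matrix.transpose_apply]

lemma LinearMap.toMatrix_comp_eq_comp_iff (b : Module.Basis ι R M) {e f f' : M →ₗ[R] M}
    {G A A' : Matrix ι ι R} (he : LinearMap.toMatrix b b e = Gᵀ)
    (hf : LinearMap.toMatrix b b f = Aᵀ) (hf' : LinearMap.toMatrix b b f' = A'ᵀ) :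
    e ∘ₗ f = f' ∘ₗ e ↔ A * G = G * A' := by
  rw [← (LinearMap.toMatrix b b).injective.eq_iff, LinearMap.toMatrix_comp b b b,
    LinearMap.toMatrix_comp b b b, he, hf, hf', ← Matrix.transpose_mul, ← Matrix.transpose_mul,
    Matrix.transpose_inj]

end ToMatrix

lemma Matrix.eq_smul_inv_mul_mul_iff {R ι : Type*} [CommRing R] [Fintype ι] [DecidableEq ι]
    {G A A' : Matrix ι ι R} (hG : IsUnit G) (γ : R) :
    A' = γ • (G⁻¹ * A * G) ↔ γ • (A * G) = G * A' := by
  have hdet := (Matrix.isUnit_iff_isUnit_det G).1 hG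
  rw [Matrix.mul_assoc]
  constructor
  · rintro rfl
    rw [Matrix.mul_smul, Matrix.mul_nonsing_inv_cancel_left _ _ hdet]
  · intro h
    rw [← Matrix.mul_smul, h, Matrix.nonsing_inv_mul_cancel_left _ _ hdet]

section OneDimensional

variable {k : Type*} [Field k] {G V : Type*} [AddCommGroup G] [Module k G] [AddCommGroup V]
  [Module k V] {z : G}

lemma LinearMap.exists_forall_eq_smul_of_span_singleton_eq_top (hz : Submodule.span k {z} = ⊤)
    (f : G →ₗ[k] G) : ∃ γ : k, ∀ g, f g = γ • g := by
  obtain ⟨γ, hγ⟩ := Submodule.mem_span_singleton.1 (hz ▸ Submodule.mem_top : f z ∈ _)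
  exact ⟨γ, LinearMap.congr_fun <|
    LinearMap.ext_on (g := (γ • LinearMap.id : G →ₗ[k] G)) hz (by simpa using hγ.symm)⟩

lemma LinearMap.forall_intertwines_iff_of_span_singleton_eq_top (hz : Submodule.span k {z} = ⊤)
    (ρ ρ' : G →ₗ[k] Module.End k V) (e : V →ₗ[k] V) (γ : k) :
    (∀ g a, e (ρ (γ • g) a) = ρ' g (e a)) ↔ e ∘ₗ (γ • ρ z) = ρ' z ∘ₗ e := by
  refine ⟨fun h => LinearMap.ext fun a => by simpa using h z a, fun h g a => ?_⟩
  obtain ⟨c, rfl⟩ := Submodule.mem_span_singleton.1 (hz ▸ Submodule.mem_top : g ∈ _)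
  have ha := LinearMap.congr_fun h a
  simp only [LinearMap.comp_apply, LinearMap.smul_apply, map_smul] at ha ⊢
  rw [smul_comm γ c, ha]

end OneDimensional

namespace PD

section PMap

variable {p : ℕ} {k : Type} [Field k] {V W : Type} [AddCommGroup V] [Module k V]
  [AddCommGroup W] [Module k W] [AbRes p k V] [AbRes p k W]

variable (p k V) in
def AbRes.pMapAddHom : V →+ V :=
  AddMonoidHom.mk' (AbRes.pMap (p := p) (k := k)) AbRes.pMap_add

lemma AbRes.pMap_zero : AbRes.pMap (p := p) (k := k) (0 : V) = 0 :=
  (AbRes.pMapAddHom p k V).map_zero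

lemma AbRes.pMap_sum {ι : Type*} (s : Finset ι) (v : ι → V) :
    AbRes.pMap (p := p) (k := k) (∑ i ∈ s, v i) =
      ∑ i ∈ s, AbRes.pMap (p := p) (k := k) (v i) :=
  map_sum (AbRes.pMapAddHom p k V) v s

lemma map_pMap_iff_of_span (f : V →ₗ[k] W) {s : Set V} (hs : Submodule.span k s = ⊤) :
    (∀ v, f (AbRes.pMap (p := p) (k := k) v) = AbRes.pMap (p := p) (k := k) (f v)) ↔
      ∀ v ∈ s, f (AbRes.pMap (p := p) (k := k) v) = AbRes.pMap (p := p) (k := k) (f v) := by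
  refine ⟨fun h v _ => h v, fun h v => ?_⟩
  have hv : v ∈ Submodule.span k s := hs ▸ Submodule.mem_top
  induction hv using Submodule.span_induction with
  | mem v hv => exact h v hv
  | zero => rw [AbRes.pMap_zero, map_zero, AbRes.pMap_zero]
  | add u v _ _ hu hv => rw [AbRes.pMap_add, map_add, map_add, hu, hv, AbRes.pMap_add]
  | smul a v _ hv => rw [AbRes.pMap_smul, map_smul, map_smul, hv, AbRes.pMap_smul]

end PMap

section Coordinates

variable {p : ℕ} {k : Type} [Field k] {V : Type} [AddCommGroup V] [Module k V] [AbRes p k V]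
  {ι : Type*} [Fintype ι]

lemma repr_pMap_sum (x : Module.Basis ι k V) {R : Matrix ι ι k}
    (hR : ∀ i, AbRes.pMap (p := p) (k := k) (x i) = ∑ j, R i j • x j) (c : ι → k) :
    x.repr (AbRes.pMap (p := p) (k := k) (∑ i, c i • x i)) = (fun i => c i ^ p) ᵥ* R := by
  rw [AbRes.pMap_sum, map_sum, Finsupp.coe_finsetSum, Matrix.vecMul_eq_sum]
  refine Finset.sum_congr rfl fun i _ => ?_
  rw [AbRes.pMap_smul, hR, map_smul, Finsupp.coe_smul, x.repr_sum_self]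

theorem map_pMap_iff_matrix [DecidableEq ι] (x : Module.Basis ι k V) {R : Matrix ι ι k}
    (hR : ∀ i, AbRes.pMap (p := p) (k := k) (x i) = ∑ j, R i j • x j) (f : V →ₗ[k] V)
    {G : Matrix ι ι k} (hG : LinearMap.toMatrix x x f = Gᵀ) :
    (∀ v, f (AbRes.pMap (p := p) (k := k) v) = AbRes.pMap (p := p) (k := k) (f v)) ↔
      G.map (· ^ p) * R = R * G := by
  have hf := (LinearMap.toMatrix_eq_transpose_iff x x f G).1 hG
  rw [map_pMap_iff_of_span f x.span_eq, Set.forall_mem_range, eq_comm, ← Matrix.ext_iff]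
  refine forall_congr' fun i => ?_
  rw [x.ext_elem_iff, ← LinearMap.toMatrix_mulVec_repr x x, hG, hR i, x.repr_sum_self,
    Matrix.mulVec_transpose, hf i, repr_pMap_sum x hR]
  rfl

end Coordinates

lemma smul_map_pMap_iff {p : ℕ} {k : Type} [Field k] {G : Type} [AddCommGroup G] [Module k G]
    [AbRes p k G] {z : G} (hz : Submodule.span k {z} = ⊤) (hz0 : z ≠ 0)
    {lam : k} (hlam : AbRes.pMap (p := p) (k := k) z = lam • z) (γ : k) :
    (∀ g : G, γ • AbRes.pMap (p := p) (k := k) g = AbRes.pMap (p := p) (k := k) (γ • g)) ↔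
      γ ^ p * lam = γ * lam := by
  have h := map_pMap_iff_of_span (p := p) (γ • LinearMap.id : G →ₗ[k] G) hz
  simp only [LinearMap.smul_apply, LinearMap.id_apply, Set.mem_singleton_iff, forall_eq] at h
  rw [h, AbRes.pMap_smul, hlam, smul_smul, smul_smul, (smul_left_injective k hz0).eq_iff,
    mul_comm γ lam, eq_comm]

end PD

open PD in
theorem type_iso_iff_matrix_conditions_general
    (p n : ℕ)
    (k : Type) [Field k]
    (G V : Type) [AddCommGroup G] [Module k G] [AddCommGroup V] [Module k V]
    [AbRes p k G] [AbRes p k V]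
    (z : G) (hz : Submodule.span k {z} = ⊤) (hz0 : z ≠ 0)
    (lam : k) (hlam : AbRes.pMap (p := p) (k := k) z = lam • z)
    (x : Module.Basis (Fin n) k V)
    (R M M' : Matrix (Fin n) (Fin n) k)
    (hR : ∀ i, AbRes.pMap (p := p) (k := k) (x i) = ∑ j, R i j • x j)
    (ρ ρ' : G →ₗ[k] Module.End k V)
    (hM : ∀ i, ρ z (x i) = ∑ j, M i j • x j)
    (hM' : ∀ i, ρ' z (x i) = ∑ j, M' i j • x j) :
    Nonempty (AbTypeIso p k ρ ρ') ↔
      ∃ (Gm : Matrix (Fin n) (Fin n) k) (γ : k), IsUnit Gm ∧ γ ≠ 0 ∧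
        (Gm.map (· ^ p)) * R = R * Gm ∧ γ ^ p * lam = γ * lam ∧
        M' = γ • (Gm⁻¹ * M * Gm) := by
  have hMz := (LinearMap.toMatrix_eq_transpose_iff x x (ρ z) M).2 hM
  have hM'z := (LinearMap.toMatrix_eq_transpose_iff x x (ρ' z) M').2 hM'
  have hγMz : ∀ γ : k, LinearMap.toMatrix x x (γ • ρ z) = (γ • M)ᵀ := fun γ => by
    rw [map_smul, hMz, Matrix.transpose_smul]
  constructor
  · rintro ⟨φ⟩
    obtain ⟨γ, hγ⟩ : ∃ γ : k, ∀ g, φ.e1.toLinearEquiv g = γ • g :=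
      LinearMap.exists_forall_eq_smul_of_span_singleton_eq_top hz φ.e1.toLinearEquiv.toLinearMap
    have hγ0 : γ ≠ 0 := by
      rintro rfl
      exact hz0 (φ.e1.toLinearEquiv.map_eq_zero_iff.1 (by simpa using hγ z))
    set Gm := (LinearMap.toMatrix x x φ.e2.toLinearEquiv)ᵀ
    have hG : LinearMap.toMatrix x x φ.e2.toLinearEquiv = Gmᵀ :=
      (Matrix.transpose_transpose _).symm
    have hGunit : IsUnit Gm := by
      rw [Matrix.isUnit_iff_isUnit_det, Matrix.det_transpose]
      exact φ.e2.toLinearEquiv.isUnit_det x x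
    refine ⟨Gm, γ, hGunit, hγ0, (map_pMap_iff_matrix x hR _ hG).1 φ.e2.map_pMap,
      (smul_map_pMap_iff hz hz0 hlam γ).1 fun g => by simpa only [hγ] using φ.e1.map_pMap g,
      ?_⟩
    rw [Matrix.eq_smul_inv_mul_mul_iff hGunit, ← Matrix.smul_mul,
      ← LinearMap.toMatrix_comp_eq_comp_iff x hG (hγMz γ) hM'z,
      ← LinearMap.forall_intertwines_iff_of_span_singleton_eq_top hz]
    simpa only [hγ, LinearEquiv.coe_coe] using φ.compat
  · rintro ⟨Gm, γ, hGm, hγ0, hGR, hγlam, hconj⟩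
    have hdet : IsUnit Gmᵀ.det := by
      rwa [Matrix.det_transpose, ← Matrix.isUnit_iff_isUnit_det]
    let e₂ := Matrix.toLinearEquiv x Gmᵀ hdet
    have hG : LinearMap.toMatrix x x e₂ = Gmᵀ := LinearMap.toMatrix_toLin x x _
    refine ⟨⟨⟨LinearEquiv.smulOfNeZero k G γ hγ0,
        (smul_map_pMap_iff hz hz0 hlam γ).2 hγlam⟩,
      ⟨e₂, (map_pMap_iff_matrix x hR _ hG).2 hGR⟩,
      (LinearMap.forall_intertwines_iff_of_span_singleton_eq_top hz ρ ρ' e₂ γ).2 ?_⟩⟩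
    rw [LinearMap.toMatrix_comp_eq_comp_iff x hG (hγMz γ) hM'z, Matrix.smul_mul,
      ← Matrix.eq_smul_inv_mul_mul_iff hGm]
    exact hconj

open PD in
/-- Suppose two abelian types `T = (g, h, ρ)` and `T' = (g, h, ρ')` are
given, w.r.t. fixed bases `z` of `g` and `x_1, …, x_n` of `h`, by triples `(λ, R, M)`
and `(λ, R, M')`.  Then `T ≅ T'` iff there exist an invertible matrix `G` and `γ ≠ 0`
with `ĜR = RG`, `γ^pλ = γλ`, and `M' = γ·G⁻¹MG`, where `Ĝ` is obtained from `G` by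
taking `p`-th powers of all entries. -/
theorem type_iso_iff_matrix_conditions
    (p n : ℕ) [Fact (Nat.Prime p)] (hp2 : 2 < p)
    (k : Type) [Field k] [CharP k p] [IsAlgClosed k]
    (G V : Type) [AddCommGroup G] [Module k G] [AddCommGroup V] [Module k V]
    [AbRes p k G] [AbRes p k V] (hn : 1 ≤ n)
    (hg : Module.finrank k G = 1)
    (z : G) (hz : Submodule.span k {z} = ⊤) (hz0 : z ≠ 0)
    (lam : k) (hlam : AbRes.pMap (p := p) (k := k) z = lam • z)
    (x : Module.Basis (Fin n) k V)
    (R M M' : Matrix (Fin n) (Fin n) k)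
    (hR : ∀ i, AbRes.pMap (p := p) (k := k) (x i) = ∑ j, R i j • x j)
    (ρ ρ' : G →ₗ[k] Module.End k V)
    (hrep : IsAlgebraicRep p k ρ) (hrep' : IsAlgebraicRep p k ρ')
    (hM : ∀ i, ρ z (x i) = ∑ j, M i j • x j)
    (hM' : ∀ i, ρ' z (x i) = ∑ j, M' i j • x j) :
    Nonempty (AbTypeIso p k ρ ρ') ↔
      ∃ (Gm : Matrix (Fin n) (Fin n) k) (γ : k), IsUnit Gm ∧ γ ≠ 0 ∧
        (Gm.map (· ^ p)) * R = R * Gm ∧ γ ^ p * lam = γ * lam ∧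
        M' = γ • (Gm⁻¹ * M * Gm) :=
  type_iso_iff_matrix_conditions_general p n k G V z hz hz0 lam hlam x R M M' hR ρ ρ' hM hM'
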